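/- arXiv:2312.16819 — 3 statements merged into one kernel-verified Lean document; each statement's English description precedes it below -/
import Mathlib

section
/- Let d ≥ 4. Define the following subspaces of M(d,d): V_t = span{I_d, J_d − I_d}; V_s = 𝔻_{d,2} + 𝕊_{d,2} + 𝔸_{d,1}; V_x = 𝔸_{d,2}; V_y = 𝕊_{d,3}. Then M(d,d) = V_t ⊕ V_s ⊕ V_x ⊕ V_y, the four summands are pairwise orthogonal with respect to the Frobenius inner product and each is invariant under the diagonal S_d-action, and their dimensions are respectively 2, 3(d−1), (d−1)(d−2)/2, and d(d−3)/2. -/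
open Matrix

/-- The permutation matrix of `σ`. -/
def permMat {d : ℕ} (σ : Equiv.Perm (Fin d)) : Matrix (Fin d) (Fin d) ℝ :=
  Matrix.of fun i j => if σ j = i then (1 : ℝ) else 0

/-- The all-ones matrix. -/
def Jmat (d : ℕ) : Matrix (Fin d) (Fin d) ℝ := Matrix.of fun _ _ => (1 : ℝ)

/-- `𝔻_{d,2}`: trace-zero diagonal matrices. -/
def Dd2 (d : ℕ) : Submodule ℝ (Matrix (Fin d) (Fin d) ℝ) where
  carrier := {A | (∀ i j, i ≠ j → A i j = 0) ∧ ∑ i, A i i = 0}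
  zero_mem' := ⟨fun i j _ => rfl, by simp⟩
  add_mem' := by
    rintro a b ⟨ha1, ha2⟩ ⟨hb1, hb2⟩
    refine ⟨fun i j hij => ?_, ?_⟩
    · simp [Matrix.add_apply, ha1 i j hij, hb1 i j hij]
    · simp [Matrix.add_apply, Finset.sum_add_distrib, ha2, hb2]
  smul_mem' := by
    rintro c a ⟨ha1, ha2⟩
    refine ⟨fun i j hij => ?_, ?_⟩
    · simp [Matrix.smul_apply, ha1 i j hij]
    · simp [Matrix.smul_apply, ← Finset.mul_sum, ha2]

/-- `𝕊_{d,2}`: symmetric, zero diagonal, off-diagonal entries `x i + x j`, `∑ x = 0`. -/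
def Sd2 (d : ℕ) : Submodule ℝ (Matrix (Fin d) (Fin d) ℝ) where
  carrier := {A | ∃ x : Fin d → ℝ, (∑ i, x i = 0) ∧ (∀ i, A i i = 0) ∧
    ∀ i j, i ≠ j → A i j = x i + x j}
  zero_mem' := ⟨0, by simp, fun i => rfl, fun i j _ => by simp⟩
  add_mem' := by
    rintro a b ⟨x, hx0, hxd, hx⟩ ⟨y, hy0, hyd, hy⟩
    refine ⟨x + y, by simp [Finset.sum_add_distrib, hx0, hy0], fun i => ?_,
      fun i j hij => ?_⟩
    · simp [Matrix.add_apply, hxd i, hyd i]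
    · simp [Matrix.add_apply, hx i j hij, hy i j hij]; ring
  smul_mem' := by
    rintro c a ⟨x, hx0, hxd, hx⟩
    refine ⟨c • x, by simp [← Finset.mul_sum, hx0], fun i => ?_, fun i j hij => ?_⟩
    · simp [Matrix.smul_apply, hxd i]
    · simp [Matrix.smul_apply, hx i j hij]; ring

/-- `𝔸_{d,1}`: matrices with `A i j = x i − x j` for some `x ∈ ℝᵈ`. -/
def Ad1 (d : ℕ) : Submodule ℝ (Matrix (Fin d) (Fin d) ℝ) where
  carrier := {A | ∃ x : Fin d → ℝ, ∀ i j, A i j = x i - x j}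
  zero_mem' := ⟨0, by simp⟩
  add_mem' := by
    rintro a b ⟨x, hx⟩ ⟨y, hy⟩
    refine ⟨x + y, fun i j => ?_⟩
    simp [Matrix.add_apply, hx, hy]; ring
  smul_mem' := by
    rintro c a ⟨x, hx⟩
    refine ⟨c • x, fun i j => ?_⟩
    simp [Matrix.smul_apply, hx]; ring

/-- `𝔸_{d,2}`: skew-symmetric matrices with all row sums zero. -/
def Ad2 (d : ℕ) : Submodule ℝ (Matrix (Fin d) (Fin d) ℝ) where
  carrier := {A | Aᵀ = -A ∧ ∀ i, ∑ j, A i j = 0}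
  zero_mem' := ⟨by simp, by simp⟩
  add_mem' := by
    rintro a b ⟨ha1, ha2⟩ ⟨hb1, hb2⟩
    refine ⟨by rw [Matrix.transpose_add, ha1, hb1, neg_add], fun i => ?_⟩
    simp [Matrix.add_apply, Finset.sum_add_distrib, ha2 i, hb2 i]
  smul_mem' := by
    rintro c a ⟨ha1, ha2⟩
    refine ⟨by rw [Matrix.transpose_smul, ha1, smul_neg], fun i => ?_⟩
    simp [Matrix.smul_apply, ← Finset.mul_sum, ha2 i]

/-- `𝕊_{d,3}`: symmetric, zero diagonal, all row sums zero. -/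
def Sd3 (d : ℕ) : Submodule ℝ (Matrix (Fin d) (Fin d) ℝ) where
  carrier := {A | Aᵀ = A ∧ (∀ i, A i i = 0) ∧ ∀ i, ∑ j, A i j = 0}
  zero_mem' := ⟨by simp, fun i => rfl, by simp⟩
  add_mem' := by
    rintro a b ⟨ha1, ha2, ha3⟩ ⟨hb1, hb2, hb3⟩
    refine ⟨by rw [Matrix.transpose_add, ha1, hb1], fun i => ?_, fun i => ?_⟩
    · simp [Matrix.add_apply, ha2 i, hb2 i]
    · simp [Matrix.add_apply, Finset.sum_add_distrib, ha3 i, hb3 i]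
  smul_mem' := by
    rintro c a ⟨ha1, ha2, ha3⟩
    refine ⟨by rw [Matrix.transpose_smul, ha1], fun i => ?_, fun i => ?_⟩
    · simp [Matrix.smul_apply, ha2 i]
    · simp [Matrix.smul_apply, ← Finset.mul_sum, ha3 i]

/-- `V_t = span{I, J − I}`, the trivial isotypic component. -/
def Vt (d : ℕ) : Submodule ℝ (Matrix (Fin d) (Fin d) ℝ) :=
  Submodule.span ℝ {(1 : Matrix (Fin d) (Fin d) ℝ), Jmat d - 1}

/-- `V_s = 𝔻_{d,2} + 𝕊_{d,2} + 𝔸_{d,1}`, the standard isotypic component. -/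
def Vs (d : ℕ) : Submodule ℝ (Matrix (Fin d) (Fin d) ℝ) := Dd2 d ⊔ Sd2 d ⊔ Ad1 d

/-!
The matrices whose off-diagonal entries have the form `u i + v j` are Frobenius-orthogonal to
the hollow matrices with vanishing row and column sums. The first family contains `V_t` and
`V_s`, the second contains `V_x` and `V_y`; `V_x ⊥ V_y` because one is skew and the other
symmetric, and `V_t ⊥ V_s` because the elements of `V_s` have zero trace and zero total sum.

A matrix is the sum of its diagonal, its hollow symmetric part and its skew part, and each of
these is split explicitly along the four spaces, so they span `M(d,d)`.

Each space injects into the coordinates at an explicit set of positions whose size is the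
claimed dimension. The four bounds add up to `d²`, and the sum is direct, so they are all
equalities.
-/

section Frobenius

variable {m n : Type*} [Fintype m] [Fintype n]

theorem trace_transpose_mul_eq_sum (A B : Matrix m n ℝ) :
    trace (Aᵀ * B) = ∑ i, ∑ j, A i j * B i j := by
  rw [← vec_dotProduct_vec, dotProduct, Fintype.sum_prod_type, Finset.sum_comm]
  rfl

def FrobOrtho (U V : Submodule ℝ (Matrix m n ℝ)) : Prop :=
  ∀ A ∈ U, ∀ B ∈ V, trace (Aᵀ * B) = 0

namespace FrobOrtho

variable {U V W : Submodule ℝ (Matrix m n ℝ)}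

theorem symm (h : FrobOrtho U V) : FrobOrtho V U := fun A hA B hB => by
  rw [← trace_transpose, transpose_mul, transpose_transpose]
  exact h B hB A hA

theorem mono (h : FrobOrtho U V) {U' V' : Submodule ℝ (Matrix m n ℝ)} (hU : U' ≤ U)
    (hV : V' ≤ V) : FrobOrtho U' V' :=
  fun A hA B hB => h A (hU hA) B (hV hB)

theorem sup_left (hU : FrobOrtho U W) (hV : FrobOrtho V W) : FrobOrtho (U ⊔ V) W := by
  intro A hA B hB
  obtain ⟨a, ha, b, hb, rfl⟩ := Submodule.mem_sup.mp hA
  rw [transpose_add, Matrix.add_mul, trace_add, hU a ha B hB, hV b hb B hB, add_zero]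

theorem sup_right (hV : FrobOrtho U V) (hW : FrobOrtho U W) : FrobOrtho U (V ⊔ W) :=
  (hV.symm.sup_left hW.symm).symm

theorem disjoint (h : FrobOrtho U V) : Disjoint U V := by
  rw [Submodule.disjoint_def]
  intro A hU hV
  simpa [← conjTranspose_eq_transpose_of_trivial, trace_conjTranspose_mul_self_eq_zero_iff]
    using h A hU A hV

theorem finrank_sup (h : FrobOrtho U V) :
    Module.finrank ℝ ↥(U ⊔ V) = Module.finrank ℝ U + Module.finrank ℝ V := by
  rw [← Submodule.finrank_sup_add_finrank_inf_eq, h.disjoint.eq_bot, finrank_bot, add_zero]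

end FrobOrtho

theorem frobOrtho_of_forall_transpose {U V : Submodule ℝ (Matrix n n ℝ)}
    (hU : ∀ A ∈ U, Aᵀ = A) (hV : ∀ B ∈ V, Bᵀ = -B) : FrobOrtho U V := by
  intro A hA B hB
  have h : trace (A * B) = trace (Bᵀ * Aᵀ) := by rw [← transpose_mul, trace_transpose]
  rw [hU A hA, hV B hB, Matrix.neg_mul, trace_neg, trace_mul_comm] at h
  rw [hU A hA, trace_mul_comm]
  linarith

end Frobenius

def offDiagAdditive (n : Type*) : Submodule ℝ (Matrix n n ℝ) where
  carrier := {A | ∃ u v : n → ℝ, ∀ i j, i ≠ j → A i j = u i + v j}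
  zero_mem' := ⟨0, 0, by simp⟩
  add_mem' := by
    rintro A B ⟨u, v, hA⟩ ⟨u', v', hB⟩
    exact ⟨u + u', v + v', fun i j hij => by
      simp only [Matrix.add_apply, hA i j hij, hB i j hij, Pi.add_apply]; ring⟩
  smul_mem' := by
    rintro c A ⟨u, v, hA⟩
    exact ⟨c • u, c • v, fun i j hij => by
      simp only [Matrix.smul_apply, hA i j hij, smul_eq_mul, Pi.smul_apply]; ring⟩

def hollowBalanced (n : Type*) [Fintype n] : Submodule ℝ (Matrix n n ℝ) where
  carrier := {B | (∀ i, B i i = 0) ∧ (∀ i, ∑ j, B i j = 0) ∧ ∀ j, ∑ i, B i j = 0}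
  zero_mem' := by simp
  add_mem' := by
    rintro A B ⟨hA₁, hA₂, hA₃⟩ ⟨hB₁, hB₂, hB₃⟩
    simp_all [Finset.sum_add_distrib]
  smul_mem' := by
    rintro c A ⟨hA₁, hA₂, hA₃⟩
    simp_all [← Finset.mul_sum]

theorem frobOrtho_offDiagAdditive_hollowBalanced {n : Type*} [Fintype n] :
    FrobOrtho (offDiagAdditive n) (hollowBalanced n) := by
  rintro A ⟨u, v, hA⟩ B ⟨hdiag, hrow, hcol⟩
  have hAB : ∀ i j, A i j * B i j = u i * B i j + v j * B i j := by
    intro i j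
    by_cases h : i = j
    · subst h; simp [hdiag]
    · rw [hA i j h]; ring
  simp only [trace_transpose_mul_eq_sum, hAB, Finset.sum_add_distrib, ← Finset.mul_sum, hrow]
  rw [Finset.sum_comm]
  simp [← Finset.mul_sum, hcol]

section Components

variable {d : ℕ}

theorem Vt_le_offDiagAdditive : Vt d ≤ offDiagAdditive (Fin d) := by
  refine Submodule.span_le.mpr (Set.insert_subset_iff.mpr ⟨⟨0, 0, fun i j hij => ?_⟩, ?_⟩)
  · simp [one_apply_ne hij]
  · rintro _ rfl
    exact ⟨1, 0, fun i j hij => by simp [Jmat, one_apply_ne hij]⟩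

theorem Vs_le_offDiagAdditive : Vs d ≤ offDiagAdditive (Fin d) := by
  refine sup_le (sup_le ?_ ?_) ?_
  · rintro A ⟨hA, -⟩
    exact ⟨0, 0, fun i j hij => by simp [hA i j hij]⟩
  · rintro A ⟨x, -, -, hA⟩
    exact ⟨x, x, hA⟩
  · rintro A ⟨x, hA⟩
    exact ⟨x, -x, fun i j _ => by simp [hA i j, sub_eq_add_neg]⟩

theorem Ad2_le_hollowBalanced : Ad2 d ≤ hollowBalanced (Fin d) := by
  rintro A ⟨hskew, hrow⟩
  have h : ∀ i j, A j i = -A i j := fun i j => by simpa using congr_fun₂ hskew i j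
  refine ⟨fun i => by linarith [h i i], hrow, fun j => ?_⟩
  rw [Finset.sum_congr rfl fun i _ => h j i, Finset.sum_neg_distrib, hrow j, neg_zero]

theorem Sd3_le_hollowBalanced : Sd3 d ≤ hollowBalanced (Fin d) := by
  rintro A ⟨hsymm, hdiag, hrow⟩
  have h : ∀ i j, A j i = A i j := fun i j => by simpa using congr_fun₂ hsymm i j
  exact ⟨hdiag, hrow, fun j => by rw [Finset.sum_congr rfl fun i _ => h j i, hrow j]⟩

end Components

theorem sum_ite_eq_zero_else_add {n : Type*} [Fintype n] [DecidableEq n] (x : n → ℝ) (i : n) :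
    ∑ j, (if i = j then 0 else x i + x j) = (Fintype.card n - 2) * x i + ∑ j, x j := by
  have h : ∀ j, (if i = j then 0 else x i + x j) = x i + x j - if i = j then x i + x j else 0 :=
    fun j => by split_ifs <;> simp
  simp only [h, Finset.sum_sub_distrib, Finset.sum_add_distrib, Finset.sum_ite_eq,
    Finset.mem_univ, if_true, Finset.sum_const, Finset.card_univ, nsmul_eq_mul]
  ring

theorem eq_of_diag_eq_zero_of_offDiag_eq_add {n : Type*} [DecidableEq n] {A : Matrix n n ℝ}
    {x : n → ℝ} (hdiag : ∀ i, A i i = 0) (hoff : ∀ i j, i ≠ j → A i j = x i + x j) :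
    A = of fun i j => if i = j then 0 else x i + x j := by
  ext i j
  by_cases h : i = j
  · subst h; simp [hdiag]
  · simp [h, hoff i j h]

section Orthogonality

variable {d : ℕ}

theorem frobOrtho_Vt {V : Submodule ℝ (Matrix (Fin d) (Fin d) ℝ)}
    (htrace : ∀ B ∈ V, trace B = 0) (hsum : ∀ B ∈ V, ∑ i, ∑ j, B i j = 0) :
    FrobOrtho (Vt d) V := by
  intro A hA B hB
  obtain ⟨a, b, rfl⟩ := Submodule.mem_span_pair.mp hA
  have hJ : trace ((Jmat d)ᵀ * B) = ∑ i, ∑ j, B i j := by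
    simp [trace_transpose_mul_eq_sum, Jmat]
  simp [Matrix.add_mul, Matrix.sub_mul, hJ, htrace B hB, hsum B hB]

theorem frobOrtho_Vt_Vs : FrobOrtho (Vt d) (Vs d) := by
  refine ((frobOrtho_Vt ?_ ?_).sup_right (frobOrtho_Vt ?_ ?_)).sup_right (frobOrtho_Vt ?_ ?_)
  · exact fun B hB => hB.2
  · rintro B ⟨hoff, htr⟩
    rw [← htr]
    exact Finset.sum_congr rfl fun i _ =>
      Finset.sum_eq_single i (fun j _ hj => hoff i j hj.symm) (by simp)
  · rintro B ⟨x, -, hdiag, -⟩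
    simp [trace, hdiag]
  · rintro B ⟨x, hx, hdiag, hoff⟩
    simp [eq_of_diag_eq_zero_of_offDiag_eq_add hdiag hoff, sum_ite_eq_zero_else_add,
      ← Finset.mul_sum, hx]
  · rintro B ⟨x, hB⟩
    simp [trace, hB]
  · rintro B ⟨x, hB⟩
    simp only [hB, Finset.sum_sub_distrib]
    rw [Finset.sum_comm, sub_self]

theorem frobOrtho_Vt_Ad2 : FrobOrtho (Vt d) (Ad2 d) :=
  frobOrtho_offDiagAdditive_hollowBalanced.mono Vt_le_offDiagAdditive Ad2_le_hollowBalanced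

theorem frobOrtho_Vt_Sd3 : FrobOrtho (Vt d) (Sd3 d) :=
  frobOrtho_offDiagAdditive_hollowBalanced.mono Vt_le_offDiagAdditive Sd3_le_hollowBalanced

theorem frobOrtho_Vs_Ad2 : FrobOrtho (Vs d) (Ad2 d) :=
  frobOrtho_offDiagAdditive_hollowBalanced.mono Vs_le_offDiagAdditive Ad2_le_hollowBalanced

theorem frobOrtho_Vs_Sd3 : FrobOrtho (Vs d) (Sd3 d) :=
  frobOrtho_offDiagAdditive_hollowBalanced.mono Vs_le_offDiagAdditive Sd3_le_hollowBalanced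

theorem frobOrtho_Ad2_Sd3 : FrobOrtho (Ad2 d) (Sd3 d) :=
  (frobOrtho_of_forall_transpose (U := Sd3 d) (V := Ad2 d) (fun _ hB => hB.1)
    fun _ hA => hA.1).symm

end Orthogonality

theorem permMat_mul_mul_transpose {d : ℕ} (σ : Equiv.Perm (Fin d))
    (A : Matrix (Fin d) (Fin d) ℝ) :
    permMat σ * A * (permMat σ)ᵀ = A.submatrix ⇑σ⁻¹ ⇑σ⁻¹ := by
  ext i j
  simp [permMat, mul_apply, ← Equiv.Perm.eq_inv_iff_eq]

def IsPermInvariant {n : Type*} (V : Submodule ℝ (Matrix n n ℝ)) : Prop :=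
  ∀ σ : Equiv.Perm n, ∀ A ∈ V, A.submatrix σ σ ∈ V

theorem IsPermInvariant.sup {n : Type*} {U V : Submodule ℝ (Matrix n n ℝ)}
    (hU : IsPermInvariant U) (hV : IsPermInvariant V) : IsPermInvariant (U ⊔ V) := by
  intro σ A hA
  obtain ⟨a, ha, b, hb, rfl⟩ := Submodule.mem_sup.mp hA
  exact Submodule.add_mem_sup (hU σ a ha) (hV σ b hb)

section Invariance

variable {d : ℕ}

theorem isPermInvariant_Vt : IsPermInvariant (Vt d) := by
  intro σ A hA
  obtain ⟨a, b, rfl⟩ := Submodule.mem_span_pair.mp hA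
  have h : (a • 1 + b • (Jmat d - 1)).submatrix σ σ = a • 1 + b • (Jmat d - 1) := by
    ext i j
    simp [Jmat, one_apply]
  rwa [h]

theorem isPermInvariant_Dd2 : IsPermInvariant (Dd2 d) := by
  rintro σ A ⟨hoff, htr⟩
  exact ⟨fun i j hij => hoff _ _ (σ.injective.ne hij),
    (Equiv.sum_comp σ fun i => A i i).trans htr⟩

theorem isPermInvariant_Sd2 : IsPermInvariant (Sd2 d) := by
  rintro σ A ⟨x, hx, hdiag, hoff⟩
  exact ⟨x ∘ σ, (Equiv.sum_comp σ x).trans hx, fun i => hdiag _,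
    fun i j hij => hoff _ _ (σ.injective.ne hij)⟩

theorem isPermInvariant_Ad1 : IsPermInvariant (Ad1 d) := by
  rintro σ A ⟨x, hA⟩
  exact ⟨x ∘ σ, fun i j => hA _ _⟩

theorem isPermInvariant_Vs : IsPermInvariant (Vs d) :=
  (isPermInvariant_Dd2.sup isPermInvariant_Sd2).sup isPermInvariant_Ad1

theorem isPermInvariant_Ad2 : IsPermInvariant (Ad2 d) := by
  rintro σ A ⟨hskew, hrow⟩
  exact ⟨by rw [transpose_submatrix, hskew]; rfl,
    fun i => (Equiv.sum_comp σ (A (σ i))).trans (hrow _)⟩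

theorem isPermInvariant_Sd3 : IsPermInvariant (Sd3 d) := by
  rintro σ A ⟨hsymm, hdiag, hrow⟩
  exact ⟨by rw [transpose_submatrix, hsymm], fun i => hdiag _,
    fun i => (Equiv.sum_comp σ (A (σ i))).trans (hrow _)⟩

end Invariance

theorem IsPermInvariant.permMat_mul_mul_transpose_mem {d : ℕ}
    {V : Submodule ℝ (Matrix (Fin d) (Fin d) ℝ)} (hV : IsPermInvariant V)
    (σ : Equiv.Perm (Fin d)) (A : Matrix (Fin d) (Fin d) ℝ) (hA : A ∈ V) :
    permMat σ * A * (permMat σ)ᵀ ∈ V := by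
  rw [permMat_mul_mul_transpose]
  exact hV σ⁻¹ A hA

section Spanning

variable {d : ℕ}

theorem diagonal_mem_Vt_sup_Dd2 (a : Fin d → ℝ) : diagonal a ∈ Vt d ⊔ Dd2 d := by
  obtain rfl | hd := eq_or_ne d 0
  · simp [Subsingleton.elim (diagonal a) 0]
  set t := (∑ i, a i) / d
  have hone : t • (1 : Matrix (Fin d) (Fin d) ℝ) ∈ Vt d :=
    Submodule.smul_mem _ _ (Submodule.subset_span (by simp))
  have hrest : diagonal a - t • 1 ∈ Dd2 d := by
    refine ⟨fun i j hij => by simp [hij], ?_⟩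
    simp only [Matrix.sub_apply, diagonal_apply_eq, Matrix.smul_apply, one_apply_eq, smul_eq_mul,
      mul_one, Finset.sum_sub_distrib, Finset.sum_const, Finset.card_univ, Fintype.card_fin,
      nsmul_eq_mul, t]
    field_simp
    ring
  simpa using Submodule.add_mem_sup hone hrest

theorem mem_Ad1_sup_Ad2_of_transpose_eq_neg {K : Matrix (Fin d) (Fin d) ℝ} (hK : Kᵀ = -K) :
    K ∈ Ad1 d ⊔ Ad2 d := by
  set y : Fin d → ℝ := fun i => (∑ j, K i j) / d
  have htotal : ∑ i, ∑ j, K i j = 0 := by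
    have h : ∑ i, ∑ j, Kᵀ i j = ∑ i, ∑ j, (-K) i j := by rw [hK]
    simp only [transpose_apply, Matrix.neg_apply, Finset.sum_neg_distrib] at h
    rw [Finset.sum_comm] at h
    linarith
  have hy : ∑ i, y i = 0 := by simp [y, ← Finset.sum_div, htotal]
  have hY : (of fun i j => y i - y j) ∈ Ad1 d := ⟨y, fun _ _ => rfl⟩
  have hrest : K - (of fun i j => y i - y j) ∈ Ad2 d := by
    refine ⟨?_, fun i => ?_⟩
    · ext i j
      have := congr_fun₂ hK i j
      simp only [transpose_apply, Matrix.neg_apply] at this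
      simp only [transpose_apply, Matrix.sub_apply, this, of_apply, Matrix.neg_apply, neg_sub]
      ring
    · have hd : (d : ℝ) ≠ 0 := Nat.cast_ne_zero.mpr i.pos.ne'
      simp only [Matrix.sub_apply, of_apply, Finset.sum_sub_distrib, Finset.sum_const,
        Finset.card_univ, Fintype.card_fin, nsmul_eq_mul, hy, sub_zero, y]
      field_simp
      ring
  simpa using Submodule.add_mem_sup hY hrest

/-- The row-sum condition on `Z - c • (J - 1) - S` reads `r i = (d - 1) c + (d - 2) x i`;
summing over `i` determines `c`, and then each `x i`. -/
theorem mem_Vt_sup_Sd2_sup_Sd3 (hd : 3 ≤ d) {Z : Matrix (Fin d) (Fin d) ℝ} (hZ : Zᵀ = Z)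
    (hdiag : ∀ i, Z i i = 0) : Z ∈ Vt d ⊔ Sd2 d ⊔ Sd3 d := by
  have hd' : (3 : ℝ) ≤ d := by exact_mod_cast hd
  have hd₀ : (d : ℝ) ≠ 0 := by linarith
  have hd₁ : (d : ℝ) - 1 ≠ 0 := by linarith
  have hd₂ : (d : ℝ) - 2 ≠ 0 := by linarith
  set r : Fin d → ℝ := fun i => ∑ j, Z i j
  set c : ℝ := (∑ i, r i) / (d * (d - 1))
  set x : Fin d → ℝ := fun i => (r i - (d - 1) * c) / (d - 2)
  set S : Matrix (Fin d) (Fin d) ℝ := of fun i j => if i = j then 0 else x i + x j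
  have hc : (d : ℝ) * (d - 1) * c = ∑ i, r i := by
    simp only [c]
    field_simp
  have hxi : ∀ i, ((d : ℝ) - 2) * x i = r i - (d - 1) * c := fun i => by
    simp only [x]
    field_simp
  have hx : ∑ i, x i = 0 := by
    simp only [x, ← Finset.sum_div, Finset.sum_sub_distrib, Finset.sum_const, Finset.card_univ,
      Fintype.card_fin, nsmul_eq_mul]
    rw [← hc]
    ring
  have hJ : c • (Jmat d - 1) ∈ Vt d := Submodule.smul_mem _ _ (Submodule.subset_span (by simp))
  have hS : S ∈ Sd2 d := ⟨x, hx, by simp [S], fun i j hij => by simp [S, hij]⟩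
  have hN : Z - c • (Jmat d - 1) - S ∈ Sd3 d := by
    refine ⟨?_, fun i => by simp [S, Jmat, hdiag], fun i => ?_⟩
    · have hZij : ∀ i j, Z j i = Z i j := fun i j => by simpa using congr_fun₂ hZ i j
      ext i j
      simp [S, Jmat, one_apply, eq_comm, add_comm, hZij]
    · have hJrow : ∑ j, (Jmat d - 1) i j = (d : ℝ) - 1 := by
        simp [Jmat, Finset.sum_sub_distrib, one_apply]
      have hSrow : ∑ j, S i j = (d - 2) * x i := by
        simpa [S, hx] using sum_ite_eq_zero_else_add x i
      have hentry : ∀ j,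
          (Z - c • (Jmat d - 1) - S) i j = Z i j - c * (Jmat d - 1) i j - S i j := fun _ => rfl
      simp only [hentry, Finset.sum_sub_distrib, ← Finset.mul_sum, hJrow, hSrow, hxi, r]
      ring
  convert Submodule.add_mem_sup (Submodule.add_mem_sup hJ hS) hN using 1
  abel

end Spanning

theorem sup_eq_top {d : ℕ} (hd : 3 ≤ d) : Vt d ⊔ Vs d ⊔ Ad2 d ⊔ Sd3 d = ⊤ := by
  have hVt : Vt d ≤ Vt d ⊔ Vs d ⊔ Ad2 d ⊔ Sd3 d :=
    le_sup_left.trans (le_sup_left.trans le_sup_left)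
  have hVs : Vs d ≤ Vt d ⊔ Vs d ⊔ Ad2 d ⊔ Sd3 d :=
    le_sup_right.trans (le_sup_left.trans le_sup_left)
  have hdiag : Vt d ⊔ Dd2 d ≤ Vt d ⊔ Vs d ⊔ Ad2 d ⊔ Sd3 d :=
    sup_le hVt ((le_sup_left.trans le_sup_left).trans hVs)
  have hsymm : Vt d ⊔ Sd2 d ⊔ Sd3 d ≤ Vt d ⊔ Vs d ⊔ Ad2 d ⊔ Sd3 d :=
    sup_le (sup_le hVt ((le_sup_right.trans le_sup_left).trans hVs)) le_sup_right
  have hskew : Ad1 d ⊔ Ad2 d ≤ Vt d ⊔ Vs d ⊔ Ad2 d ⊔ Sd3 d :=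
    sup_le (le_sup_right.trans hVs) (le_sup_right.trans le_sup_left)
  refine Submodule.eq_top_iff'.mpr fun A => ?_
  set Z := (2⁻¹ : ℝ) • (A + Aᵀ) - diagonal (diag A)
  set K := (2⁻¹ : ℝ) • (A - Aᵀ)
  have hZ : Zᵀ = Z := by simp [Z, transpose_sub, add_comm]
  have hZdiag : ∀ i, Z i i = 0 := fun i => by
    simp only [Z, Matrix.sub_apply, Matrix.smul_apply, Matrix.add_apply, transpose_apply,
      diagonal_apply_eq, diag_apply, smul_eq_mul]
    ring
  have hK : Kᵀ = -K := by
    rw [transpose_smul, transpose_sub, transpose_transpose, ← neg_sub, smul_neg]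
  have hA : A = diagonal (diag A) + Z + K := by
    simp only [Z, K]
    module
  rw [hA]
  exact add_mem (add_mem (hdiag (diagonal_mem_Vt_sup_Dd2 _))
    (hsymm (mem_Vt_sup_Sd2_sup_Sd3 hd hZ hZdiag))) (hskew (mem_Ad1_sup_Ad2_of_transpose_eq_neg hK))

theorem finrank_le_card_of_forall_entry_eq_zero {K m n ι : Type*} [Field K] [Fintype ι]
    {V : Submodule K (Matrix m n K)} (pos : ι → m × n)
    (h : ∀ A ∈ V, (∀ k, A (pos k).1 (pos k).2 = 0) → A = 0) :
    Module.finrank K V ≤ Fintype.card ι := by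
  let f : V →ₗ[K] ι → K :=
    LinearMap.pi fun k => (entryLinearMap K K (pos k).1 (pos k).2).comp V.subtype
  have hf : Function.Injective f :=
    (injective_iff_map_eq_zero f).mpr fun A hA =>
      Subtype.ext (h A A.2 fun k => congrFun hA k)
  simpa using LinearMap.finrank_le_finrank_of_injective hf

section HollowBalanced

variable {n : ℕ} {B : Matrix (Fin (n + 1)) (Fin (n + 1)) ℝ}

theorem sum_succ_succ_eq_zero_of_mem_hollowBalanced (hB : B ∈ hollowBalanced (Fin (n + 1))) :
    ∑ i : Fin n, ∑ j : Fin n, B i.succ j.succ = 0 := by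
  obtain ⟨hdiag, hrow, hcol⟩ := hB
  have hrow' : ∀ i : Fin n, ∑ j : Fin n, B i.succ j.succ = -B i.succ 0 := fun i => by
    linarith [Fin.sum_univ_succ (B i.succ), hrow i.succ]
  have hcol0 := hcol 0
  rw [Fin.sum_univ_succ, hdiag, zero_add] at hcol0
  simp [hrow', hcol0]

theorem eq_zero_of_mem_hollowBalanced_of_succ (hB : B ∈ hollowBalanced (Fin (n + 1)))
    (h : ∀ i j : Fin n, B i.succ j.succ = 0) : B = 0 := by
  obtain ⟨hdiag, hrow, hcol⟩ := hB
  have hcol0 : ∀ i : Fin n, B i.succ 0 = 0 := fun i => by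
    simpa [Fin.sum_univ_succ, h] using hrow i.succ
  have hrow0 : ∀ j : Fin n, B 0 j.succ = 0 := fun j => by
    simpa [Fin.sum_univ_succ, h] using hcol j.succ
  ext i j
  cases i using Fin.cases <;> cases j using Fin.cases <;> simp [hdiag, hcol0, hrow0, h]

end HollowBalanced

theorem finrank_Vt_le (d : ℕ) : Module.finrank ℝ (Vt d) ≤ 2 := by
  have h := finrank_span_finset_le_card (R := ℝ)
    ({1, Jmat d - 1} : Finset (Matrix (Fin d) (Fin d) ℝ))
  rw [Finset.coe_pair] at h
  exact h.trans Finset.card_le_two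

theorem finrank_Dd2_le (n : ℕ) : Module.finrank ℝ (Dd2 (n + 1)) ≤ n := by
  refine (finrank_le_card_of_forall_entry_eq_zero (fun i : Fin n => (i.succ, i.succ)) ?_).trans_eq
    (Fintype.card_fin n)
  rintro A ⟨hoff, htr⟩ hz
  have h0 : A 0 0 = 0 := by simpa [Fin.sum_univ_succ, hz] using htr
  ext i j
  by_cases hij : i = j
  · subst hij
    cases i using Fin.cases <;> simp [h0, hz]
  · exact hoff i j hij

theorem finrank_Ad1_le (n : ℕ) : Module.finrank ℝ (Ad1 (n + 1)) ≤ n := by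
  refine (finrank_le_card_of_forall_entry_eq_zero (fun i : Fin n => (i.succ, 0)) ?_).trans_eq
    (Fintype.card_fin n)
  rintro A ⟨x, hA⟩ hz
  have hx : ∀ i, x i = x 0 := Fin.cases rfl fun i => by
    simpa [hA, sub_eq_zero] using hz i
  ext i j
  simp [hA, hx i, hx j]

theorem finrank_Sd2_le {n : ℕ} (hn : 2 ≤ n) : Module.finrank ℝ (Sd2 (n + 1)) ≤ n := by
  refine (finrank_le_card_of_forall_entry_eq_zero (fun i : Fin n => (0, i.succ)) ?_).trans_eq
    (Fintype.card_fin n)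
  rintro A ⟨x, hsum, hdiag, hoff⟩ hz
  have hsucc : ∀ i : Fin n, x i.succ = -x 0 := fun i => by
    have := hz i
    rw [hoff _ _ (Fin.succ_ne_zero i).symm] at this
    linarith
  have hx0 : x 0 = 0 := by
    have hn' : (2 : ℝ) ≤ n := by exact_mod_cast hn
    simp only [Fin.sum_univ_succ, hsucc, Finset.sum_neg_distrib, Finset.sum_const,
      Finset.card_univ, Fintype.card_fin, nsmul_eq_mul] at hsum
    nlinarith
  have hx : ∀ i, x i = 0 := Fin.cases hx0 fun i => by rw [hsucc, hx0, neg_zero]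
  ext i j
  by_cases hij : i = j
  · subst hij; simp [hdiag]
  · simp [hoff i j hij, hx]

theorem finrank_Vs_le {d : ℕ} (hd : 3 ≤ d) : Module.finrank ℝ (Vs d) ≤ 3 * (d - 1) := by
  obtain ⟨n, rfl⟩ : ∃ n, d = n + 1 := ⟨d - 1, by omega⟩
  have h₁ :=
    Submodule.finrank_add_le_finrank_add_finrank (Dd2 (n + 1) ⊔ Sd2 (n + 1)) (Ad1 (n + 1))
  have h₂ := Submodule.finrank_add_le_finrank_add_finrank (Dd2 (n + 1)) (Sd2 (n + 1))
  have := finrank_Dd2_le n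
  have := finrank_Sd2_le (show 2 ≤ n by omega)
  have := finrank_Ad1_le n
  unfold Vs
  omega

theorem finrank_Ad2_le (d : ℕ) : Module.finrank ℝ (Ad2 d) ≤ (d - 1) * (d - 2) / 2 := by
  obtain _ | n := d
  · simp [Module.finrank_zero_of_subsingleton]
  have hcard : Fintype.card {p : Fin n × Fin n // p.1 < p.2} = (n + 1 - 1) * (n + 1 - 2) / 2 := by
    rw [Fintype.card_subtype, Fintype.card_product_filter_lt, Fintype.card_fin,
      Nat.choose_two_right, Nat.add_sub_cancel, Nat.add_sub_add_right n 1 1]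
  refine (finrank_le_card_of_forall_entry_eq_zero (fun p => (p.1.1.succ, p.1.2.succ)) ?_).trans_eq
    hcard
  intro A hA hz
  have hskew : ∀ i j, A j i = -A i j := fun i j => by simpa using congr_fun₂ hA.1 i j
  refine eq_zero_of_mem_hollowBalanced_of_succ (Ad2_le_hollowBalanced hA) fun i j => ?_
  rcases lt_trichotomy i j with hij | rfl | hij
  · exact hz ⟨(i, j), hij⟩
  · linarith [hskew i.succ i.succ]
  · rw [hskew, hz ⟨(j, i), hij⟩, neg_zero]

/-- The free positions are the pairs of nonzero indices other than `{1, 2}`; the entry at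
`{1, 2}` then vanishes because the block of a hollow balanced matrix away from index `0` has
total sum zero. -/
theorem finrank_Sd3_le {d : ℕ} (hd : 3 ≤ d) :
    Module.finrank ℝ (Sd3 d) ≤ d * (d - 3) / 2 := by
  obtain ⟨m, rfl⟩ : ∃ m, d = m + 3 := ⟨d - 3, by omega⟩
  have hcard : Fintype.card {p : Fin (m + 2) × Fin (m + 2) // p.1 < p.2 ∧ p ≠ (0, 1)}
      = (m + 3) * (m + 3 - 3) / 2 := by
    rw [Fintype.card_subtype, ← Finset.filter_filter, Finset.filter_ne',
      Finset.card_erase_of_mem (by simp), Fintype.card_product_filter_lt, Fintype.card_fin,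
      Nat.choose_two_right, show m + 2 - 1 = m + 1 by omega, show m + 3 - 3 = m by omega]
    have : (m + 2) * (m + 1) = (m + 3) * m + 2 := by ring
    omega
  refine (finrank_le_card_of_forall_entry_eq_zero (fun p => (p.1.1.succ, p.1.2.succ)) ?_).trans_eq
    hcard
  intro A hA hz
  have hsymm : ∀ i j, A j i = A i j := fun i j => by simpa using congr_fun₂ hA.1 i j
  have hbal := Sd3_le_hollowBalanced hA
  have hout : ∀ i j : Fin (m + 2), (i, j) ≠ (0, 1) → (i, j) ≠ (1, 0) →
      A i.succ j.succ = 0 := by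
    intro i j h01 h10
    rcases lt_trichotomy i j with hij | rfl | hij
    · exact hz ⟨(i, j), hij, h01⟩
    · exact hA.2.1 _
    · rw [hsymm]
      exact hz ⟨(j, i), hij, fun h => h10 (by simp_all)⟩
  have h10 : A (1 : Fin (m + 2)).succ (0 : Fin (m + 2)).succ = 0 := by
    have hsum := sum_succ_succ_eq_zero_of_mem_hollowBalanced hbal
    rw [← Fintype.sum_prod_type' (f := fun i j : Fin (m + 2) => A i.succ j.succ),
      Fintype.sum_eq_add ((0 : Fin (m + 2)), (1 : Fin (m + 2))) (1, 0) (by simp)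
        fun p hp => hout p.1 p.2 hp.1 hp.2, hsymm] at hsum
    linarith
  refine eq_zero_of_mem_hollowBalanced_of_succ hbal fun i j => ?_
  by_cases h01 : (i, j) = (0, 1)
  · simp only [Prod.ext_iff] at h01
    rw [h01.1, h01.2, hsymm, h10]
  by_cases h10' : (i, j) = (1, 0)
  · simp only [Prod.ext_iff] at h10'
    rw [h10'.1, h10'.2, h10]
  exact hout i j h01 h10'

theorem finrank_Vt_add_Vs_add_Ad2_add_Sd3 {d : ℕ} (hd : 3 ≤ d) :
    Module.finrank ℝ (Vt d) + Module.finrank ℝ (Vs d) + Module.finrank ℝ (Ad2 d)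
      + Module.finrank ℝ (Sd3 d) = d * d := by
  rw [← frobOrtho_Vt_Vs.finrank_sup, ← (frobOrtho_Vt_Ad2.sup_left frobOrtho_Vs_Ad2).finrank_sup,
    ← ((frobOrtho_Vt_Sd3.sup_left frobOrtho_Vs_Sd3).sup_left frobOrtho_Ad2_Sd3).finrank_sup,
    sup_eq_top hd, finrank_top, Module.finrank_matrix]
  simp

theorem two_add_three_mul_add_div_two_add_div_two {d : ℕ} (hd : 3 ≤ d) :
    2 + 3 * (d - 1) + (d - 1) * (d - 2) / 2 + d * (d - 3) / 2 = d * d := by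
  obtain ⟨k, rfl⟩ : ∃ k, d = k + 3 := ⟨d - 3, by omega⟩
  simp only [show k + 3 - 1 = k + 2 by omega, show k + 3 - 2 = k + 1 by omega,
    show k + 3 - 3 = k by omega]
  have heven : (k + 1) * (k + 2) % 2 = 0 := Nat.even_iff.mp (Nat.even_mul_succ_self (k + 1))
  have h₁ : (k + 2) * (k + 1) = (k + 1) * (k + 2) := by ring
  have h₂ : (k + 3) * k + 2 = (k + 1) * (k + 2) := by ring
  have h₃ : (k + 3) * (k + 3) = (k + 1) * (k + 2) + 3 * k + 7 := by ring
  omega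

/-- for `d ≥ 4`, `M(d,d)` is the orthogonal (Frobenius) direct sum of the
four `S_d`-invariant isotypic components `V_t`, `V_s`, `V_x = 𝔸_{d,2}`, `V_y = 𝕊_{d,3}`
of dimensions `2`, `3(d−1)`, `(d−1)(d−2)/2` and `d(d−3)/2` respectively. -/
theorem isotypic_decomposition (d : ℕ) (hd : 4 ≤ d) :
    Vt d ⊔ Vs d ⊔ Ad2 d ⊔ Sd3 d = (⊤ : Submodule ℝ (Matrix (Fin d) (Fin d) ℝ)) ∧
    (∀ A ∈ Vt d, ∀ B ∈ Vs d, Matrix.trace (Aᵀ * B) = 0) ∧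
    (∀ A ∈ Vt d, ∀ B ∈ Ad2 d, Matrix.trace (Aᵀ * B) = 0) ∧
    (∀ A ∈ Vt d, ∀ B ∈ Sd3 d, Matrix.trace (Aᵀ * B) = 0) ∧
    (∀ A ∈ Vs d, ∀ B ∈ Ad2 d, Matrix.trace (Aᵀ * B) = 0) ∧
    (∀ A ∈ Vs d, ∀ B ∈ Sd3 d, Matrix.trace (Aᵀ * B) = 0) ∧
    (∀ A ∈ Ad2 d, ∀ B ∈ Sd3 d, Matrix.trace (Aᵀ * B) = 0) ∧
    (∀ σ : Equiv.Perm (Fin d), ∀ A ∈ Vt d, permMat σ * A * (permMat σ)ᵀ ∈ Vt d) ∧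
    (∀ σ : Equiv.Perm (Fin d), ∀ A ∈ Vs d, permMat σ * A * (permMat σ)ᵀ ∈ Vs d) ∧
    (∀ σ : Equiv.Perm (Fin d), ∀ A ∈ Ad2 d, permMat σ * A * (permMat σ)ᵀ ∈ Ad2 d) ∧
    (∀ σ : Equiv.Perm (Fin d), ∀ A ∈ Sd3 d, permMat σ * A * (permMat σ)ᵀ ∈ Sd3 d) ∧
    Module.finrank ℝ (Vt d) = 2 ∧
    Module.finrank ℝ (Vs d) = 3 * (d - 1) ∧
    Module.finrank ℝ (Ad2 d) = (d - 1) * (d - 2) / 2 ∧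
    Module.finrank ℝ (Sd3 d) = d * (d - 3) / 2 := by
  have hd₃ : 3 ≤ d := by omega
  have htotal := finrank_Vt_add_Vs_add_Ad2_add_Sd3 hd₃
  have hcount := two_add_three_mul_add_div_two_add_div_two hd₃
  have hVt := finrank_Vt_le d
  have hVs := finrank_Vs_le hd₃
  have hAd2 := finrank_Ad2_le d
  have hSd3 := finrank_Sd3_le hd₃
  refine ⟨sup_eq_top hd₃, frobOrtho_Vt_Vs, frobOrtho_Vt_Ad2, frobOrtho_Vt_Sd3, frobOrtho_Vs_Ad2,
    frobOrtho_Vs_Sd3, frobOrtho_Ad2_Sd3, isPermInvariant_Vt.permMat_mul_mul_transpose_mem,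
    isPermInvariant_Vs.permMat_mul_mul_transpose_mem,
    isPermInvariant_Ad2.permMat_mul_mul_transpose_mem,
    isPermInvariant_Sd3.permMat_mul_mul_transpose_mem, ?_, ?_, ?_, ?_⟩ <;> omega
end

section
/- Let d ≥ 3 and let V_s = 𝔻_{d,2} + 𝕊_{d,2} + 𝔸_{d,1} ⊆ M(d,d). If W ∈ V_s satisfies P_σ W P_σᵀ = W for all σ ∈ S_d, then W = 0; that is, V_s ∩ M(d,d)^{S_d} = {0}. -/
open Matrix

lemma permMat_conj {d : ℕ} (σ : Equiv.Perm (Fin d)) (W : Matrix (Fin d) (Fin d) ℝ) (i j : Fin d) :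
    (permMat σ * W * (permMat σ)ᵀ) i j = W (σ⁻¹ i) (σ⁻¹ j) := by
  simp only [Matrix.mul_apply, Matrix.transpose_apply, permMat, Matrix.of_apply]
  have h : ∀ k : Fin d, (σ k = i) = (k = σ⁻¹ i) := fun k => by
    rw [eq_iff_iff, Equiv.Perm.eq_inv_iff_eq]
  have h2 : ∀ k : Fin d, (σ k = j) = (k = σ⁻¹ j) := fun k => by
    rw [eq_iff_iff, Equiv.Perm.eq_inv_iff_eq]
  simp only [h, h2, ite_mul, one_mul, zero_mul, Finset.sum_ite_eq', Finset.mem_univ, if_true,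
    mul_ite, mul_one, mul_zero]


/-- for `d ≥ 3`, the standard isotypic component
`V_s = 𝔻_{d,2} + 𝕊_{d,2} + 𝔸_{d,1}` intersects the fixed-point space `M(d,d)^{S_d}`
trivially: any `W ∈ V_s` fixed by the diagonal `S_d`-action is zero. -/
theorem Vs_inter_fixed_Sd_trivial (d : ℕ) (hd : 3 ≤ d)
    (W : Matrix (Fin d) (Fin d) ℝ) (hW : W ∈ Dd2 d ⊔ Sd2 d ⊔ Ad1 d)
    (hfix : ∀ σ : Equiv.Perm (Fin d), permMat σ * W * (permMat σ)ᵀ = W) :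
    W = 0 := by
  -- invariance: W (σ i) (σ j) = W i j
  have hinv : ∀ (σ : Equiv.Perm (Fin d)) (i j : Fin d), W (σ i) (σ j) = W i j := by
    intro σ i j
    have := congrFun (congrFun (hfix σ⁻¹) i) j
    rw [permMat_conj] at this
    simpa using this
  -- three distinct points exist around any pair
  have hex : ∀ j k : Fin d, ∃ i : Fin d, i ≠ j ∧ i ≠ k := by
    intro j k
    by_contra h
    push_neg at h
    have hsub : (Finset.univ : Finset (Fin d)) ⊆ {j, k} := by
      intro i _
      rcases eq_or_ne i j with rfl | hij
      · simp
      · simp [h i hij]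
    have := Finset.card_le_card hsub
    simp only [Finset.card_univ, Fintype.card_fin] at this
    have h2 : ({j, k} : Finset (Fin d)).card ≤ 2 :=
      le_trans (Finset.card_insert_le _ _) (by simp)
    omega
  -- decompose W
  rw [sup_assoc] at hW
  obtain ⟨D, hD, R, hR, rfl⟩ := Submodule.mem_sup.mp hW
  obtain ⟨S, hS, A, hA, rfl⟩ := Submodule.mem_sup.mp hR
  obtain ⟨hDoff, hDtr⟩ := hD
  obtain ⟨x, hx0, hSd, hSoff⟩ := hS
  obtain ⟨y, hy⟩ := hA
  set W := D + (S + A) with hWdef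
  have hWoff : ∀ i j : Fin d, i ≠ j → W i j = x i + x j + (y i - y j) := by
    intro i j hij
    simp [hWdef, Matrix.add_apply, hDoff i j hij, hSoff i j hij, hy]
  have hWdiag : ∀ i : Fin d, W i i = D i i := by
    intro i
    simp [hWdef, Matrix.add_apply, hSd i, hy]
  -- y is constant
  have hyc : ∀ i j : Fin d, y i = y j := by
    intro i j
    rcases eq_or_ne i j with rfl | hij
    · rfl
    · have h1 := hinv (Equiv.swap i j) i j
      rw [Equiv.swap_apply_left, Equiv.swap_apply_right] at h1
      rw [hWoff j i (Ne.symm hij), hWoff i j hij] at h1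
      linarith
  -- x is constant
  have hxc : ∀ i j : Fin d, x i = x j := by
    intro i j
    rcases eq_or_ne i j with rfl | hij
    · rfl
    · obtain ⟨k, hki, hkj⟩ := hex i j
      have h1 := hinv (Equiv.swap i j) k i
      rw [Equiv.swap_apply_left, Equiv.swap_apply_of_ne_of_ne hki hkj] at h1
      rw [hWoff k j (hkj), hWoff k i (hki)] at h1
      have := hyc i j
      linarith
  -- x = 0
  have hxz : ∀ i : Fin d, x i = 0 := by
    intro i
    have hsum : ∑ j, x j = ∑ _j : Fin d, x i :=
      Finset.sum_congr rfl fun j _ => (hxc j i)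
    rw [hx0] at hsum
    simp only [Finset.sum_const, Finset.card_univ, Fintype.card_fin, nsmul_eq_mul] at hsum
    have hd0 : (0:ℝ) < d := by exact_mod_cast lt_of_lt_of_le (by norm_num) hd
    have := hsum.symm
    nlinarith
  -- diagonal of D is constant, hence zero
  have hDc : ∀ i j : Fin d, D i i = D j j := by
    intro i j
    rcases eq_or_ne i j with rfl | hij
    · rfl
    · have h1 := hinv (Equiv.swap i j) i i
      rw [Equiv.swap_apply_left] at h1
      rw [hWdiag j, hWdiag i] at h1
      exact h1.symm
  have hDz : ∀ i : Fin d, D i i = 0 := by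
    intro i
    have hsum : ∑ j, D j j = ∑ _j : Fin d, D i i :=
      Finset.sum_congr rfl fun j _ => (hDc j i)
    rw [hDtr] at hsum
    simp only [Finset.sum_const, Finset.card_univ, Fintype.card_fin, nsmul_eq_mul] at hsum
    have hd0 : (0:ℝ) < d := by exact_mod_cast lt_of_lt_of_le (by norm_num) hd
    have := hsum.symm
    nlinarith
  -- conclude
  ext i j
  rcases eq_or_ne i j with rfl | hij
  · rw [hWdiag i, hDz i]; simp
  · rw [hWoff i j hij, hxz i, hxz j, hyc i j]; simp
end

section
/- Let d ≥ 4, let V_s = 𝔻_{d,2} + 𝕊_{d,2} + 𝔸_{d,1} ⊆ M(d,d), and let F = V_s ∩ M(d,d)^{S_{d−1}×S_1}, a three-dimensional subspace. Let A : M(d,d) → M(d,d) be a linear map satisfying A(P_σ W P_σᵀ) = P_σ A(W) P_σᵀ for all σ ∈ S_d and all W. Then A preserves both V_s and F, and the characteristic polynomial of the restriction A|_{V_s} equals the (d−1)-st power of the characteristic polynomial of the restriction A|_F. In particular, every eigenvalue of A|_{V_s} has multiplicity divisible by d−1 and is an eigenvalue of A|_F. -/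
open Matrix

/-- The fixed-point space of a set `G` of permutations for the diagonal action
`W ↦ P_σ W P_σᵀ` on `d × d` matrices. -/
def fixedSpace {d : ℕ} (G : Set (Equiv.Perm (Fin d))) :
    Submodule ℝ (Matrix (Fin d) (Fin d) ℝ) where
  carrier := {W | ∀ σ ∈ G, permMat σ * W * (permMat σ)ᵀ = W}
  zero_mem' := by intro σ _; simp
  add_mem' := by
    intro a b ha hb σ hσ
    rw [Matrix.mul_add, Matrix.add_mul, ha σ hσ, hb σ hσ]
  smul_mem' := by
    intro c a ha σ hσ
    rw [Matrix.mul_smul, Matrix.smul_mul, ha σ hσ]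

/-!
The maps `x ↦ diagonal x`, `x ↦ (x i + x j)_{i ≠ j}` and `x ↦ (x i - x j)_{i j}` together embed
three copies of the standard representation `Z = {x | ∑ i, x i = 0}` of `S_d` equivariantly onto
`V_s`, and three copies of the line `Z^{S_{d-1} × S_1}` onto `F`. An equivariant linear map
`ℝᵈ → M(d,d)` is determined by its values on the `S_d`-orbits of index triples, and on `Z` it is
a combination of these three maps. Hence `A` acts on `Z³` and on `(Z^{S_{d-1} × S_1})³` through
one and the same `3 × 3` matrix `M`, so the two characteristic polynomials are `χ_M ^ (d - 1)`
and `χ_M`.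
-/

open Module Submodule

namespace LinearMap

variable {K N E : Type*} [Field K] [AddCommGroup N] [Module K N] [AddCommGroup E] [Module K E]
  [FiniteDimensional K N] [FiniteDimensional K E]

theorem exists_restrict_charpoly_eq {Φ : N →ₗ[K] E} (hΦ : Function.Injective Φ)
    {A : Module.End K E} {T : Module.End K N} (hAT : A ∘ₗ Φ = Φ ∘ₗ T)
    {P : Submodule K E} (hP : range Φ = P) :
    ∃ h : ∀ w ∈ P, A w ∈ P, (A.restrict h).charpoly = T.charpoly := by
  subst hP
  have h : ∀ w ∈ range Φ, A w ∈ range Φ := by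
    rintro _ ⟨n, rfl⟩
    exact ⟨T n, (congr($hAT n)).symm⟩
  refine ⟨h, ?_⟩
  let e := LinearEquiv.ofInjective Φ hΦ
  have : A.restrict h = e.conj T := by
    ext ⟨_, n, rfl⟩
    change A (Φ n) = Φ (T (e.symm (e n)))
    rw [e.symm_apply_apply]
    exact congr($hAT n)
  rw [this, LinearEquiv.charpoly_conj]

theorem charpoly_pi_const [Infinite K] {κ : Type*} [Fintype κ] (f : Module.End K N) :
    (LinearMap.pi fun i : κ => f ∘ₗ proj i).charpoly = f.charpoly ^ Fintype.card κ := by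
  refine Polynomial.funext fun t => ?_
  have : algebraMap K (Module.End K (κ → N)) t - LinearMap.pi (fun i : κ => f ∘ₗ proj i) =
      LinearMap.pi (fun i => (algebraMap K (Module.End K N) t - f) ∘ₗ proj i) := by
    ext; simp
  rw [eval_charpoly, this, det_pi, Polynomial.eval_pow, eval_charpoly, Finset.prod_const,
    Finset.card_univ]

end LinearMap

namespace Matrix

variable {ι R N : Type*} [Fintype ι] [CommRing R] [AddCommGroup N] [Module R N]

def toEndPi (M : Matrix ι ι R) : Module.End R (ι → N) :=
  LinearMap.pi fun q => ∑ p, M q p • LinearMap.proj p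

@[simp]
theorem toEndPi_apply (M : Matrix ι ι R) (v : ι → N) (q : ι) :
    M.toEndPi v q = ∑ p, M q p • v p := by
  simp [toEndPi]

theorem charpoly_toEndPi {K : Type*} [Field K] [Infinite K] [Module K N] [FiniteDimensional K N]
    [DecidableEq ι] (M : Matrix ι ι K) :
    (M.toEndPi (N := N)).charpoly = M.charpoly ^ finrank K N := by
  let b := Module.finBasis K N
  let comm : (ι → Fin (finrank K N) → K) ≃ₗ[K] (Fin (finrank K N) → ι → K) :=
    { Equiv.piComm _ with map_add' := fun _ _ => rfl, map_smul' := fun _ _ => rfl }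
  let e := (LinearEquiv.piCongrRight fun _ : ι => b.equivFun).trans comm
  have : e.conj M.toEndPi = LinearMap.pi fun k => M.mulVecLin ∘ₗ LinearMap.proj k := by
    refine LinearMap.ext fun v => funext fun k => funext fun q => ?_
    simp [e, comm, LinearEquiv.conj_apply, Matrix.mulVec, dotProduct, Function.swap,
      Equiv.piComm, Finsupp.single_apply]
  rw [← e.charpoly_conj, this, LinearMap.charpoly_pi_const, charpoly_mulVecLin, Fintype.card_fin]

end Matrix

theorem injective_vec_three {α : Type*} {a b c : α} (hab : a ≠ b) (hac : a ≠ c) (hbc : b ≠ c) :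
    Function.Injective ![a, b, c] := by
  rw [Matrix.vecCons, Fin.cons_injective_iff]
  simp [hab.symm, hac.symm, hbc, Set.range]

variable {d : ℕ}

theorem permMat_mul_mul_transpose_apply (σ : Equiv.Perm (Fin d))
    (W : Matrix (Fin d) (Fin d) ℝ) (i j : Fin d) :
    (permMat σ * W * (permMat σ)ᵀ) i j = W (σ⁻¹ i) (σ⁻¹ j) := by
  simp [permMat, Matrix.mul_apply, ← Equiv.eq_symm_apply]

def sumZero (d : ℕ) : Submodule ℝ (Fin d → ℝ) :=
  LinearMap.ker (∑ i, LinearMap.proj i : Dual ℝ (Fin d → ℝ))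

@[simp]
theorem mem_sumZero {x : Fin d → ℝ} : x ∈ sumZero d ↔ ∑ i, x i = 0 := by
  simp [sumZero]

theorem finrank_sumZero (hd : 0 < d) : finrank ℝ (sumZero d) = d - 1 := by
  have hf : (∑ i, LinearMap.proj i : Dual ℝ (Fin d → ℝ)) ≠ 0 := fun h => by
    simpa using congr($h (Pi.single ⟨0, hd⟩ 1))
  have := Dual.finrank_ker_add_one_of_ne_zero hf
  rw [Module.finrank_fin_fun] at this
  rw [sumZero]
  omega

theorem perm_mem_sumZero {x : Fin d → ℝ} (hx : x ∈ sumZero d) (σ : Equiv.Perm (Fin d)) :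
    (fun i => x (σ⁻¹ i)) ∈ sumZero d := by
  rw [mem_sumZero] at hx ⊢
  rwa [Equiv.sum_comp σ⁻¹ x]

def fixedVectors (G : Set (Equiv.Perm (Fin d))) : Submodule ℝ (Fin d → ℝ) where
  carrier := {x | ∀ σ ∈ G, (fun i => x (σ⁻¹ i)) = x}
  zero_mem' _ _ := rfl
  add_mem' hx hy σ hσ := funext fun i => congr($(hx σ hσ) i + $(hy σ hσ) i)
  smul_mem' c _ hx σ hσ := funext fun i => congr(c * $(hx σ hσ) i)

def pairSumMatrix : (Fin d → ℝ) →ₗ[ℝ] Matrix (Fin d) (Fin d) ℝ where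
  toFun x := Matrix.of fun i j => if i = j then 0 else x i + x j
  map_add' x y := by
    ext i j
    by_cases h : i = j
    · simp [h]
    · simp only [Pi.add_apply, of_apply, h, if_false, Matrix.add_apply]
      ring
  map_smul' c x := by
    ext i j
    by_cases h : i = j
    · simp [h]
    · simp only [Pi.smul_apply, smul_eq_mul, of_apply, h, if_false, RingHom.id_apply,
        Matrix.smul_apply]
      ring

def pairDiffMatrix : (Fin d → ℝ) →ₗ[ℝ] Matrix (Fin d) (Fin d) ℝ where
  toFun x := Matrix.of fun i j => x i - x j
  map_add' x y := by ext i j; simp only [Pi.add_apply, of_apply, Matrix.add_apply]; ring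
  map_smul' c x := by
    ext i j
    simp only [Pi.smul_apply, smul_eq_mul, of_apply, RingHom.id_apply, Matrix.smul_apply]
    ring

@[simp]
theorem pairSumMatrix_apply (x : Fin d → ℝ) (i j : Fin d) :
    pairSumMatrix x i j = if i = j then 0 else x i + x j := rfl

@[simp]
theorem pairDiffMatrix_apply (x : Fin d → ℝ) (i j : Fin d) :
    pairDiffMatrix x i j = x i - x j := rfl

theorem Dd2_eq_map : Dd2 d = (sumZero d).map (diagonalLinearMap (Fin d) ℝ ℝ) := by
  ext W
  constructor
  · rintro ⟨hoff, htr⟩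
    refine ⟨fun i => W i i, by simpa using htr, ?_⟩
    ext i j
    by_cases hij : i = j
    · simp [hij]
    · simp [hij, hoff i j hij]
  · rintro ⟨x, hx, rfl⟩
    exact ⟨fun i j hij => diagonal_apply_ne _ hij, by simpa using hx⟩

theorem Sd2_eq_map : Sd2 d = (sumZero d).map pairSumMatrix := by
  ext W
  constructor
  · rintro ⟨x, hx, hdiag, hoff⟩
    refine ⟨x, by simpa using hx, ?_⟩
    ext i j
    by_cases hij : i = j
    · simp [hij, hdiag]
    · simp [hij, hoff i j hij]
  · rintro ⟨x, hx, rfl⟩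
    exact ⟨x, by simpa using hx, fun i => by simp, fun i j hij => by simp [hij]⟩

theorem Ad1_eq_map : Ad1 d = (sumZero d).map pairDiffMatrix := by
  ext W
  constructor
  · rintro ⟨x, hx⟩
    refine ⟨fun i => x i - (∑ j, x j) / d, ?_, by ext i j; simp [hx]⟩
    rcases eq_or_ne d 0 with rfl | hd
    · simp
    · simp only [SetLike.mem_coe, mem_sumZero, Finset.sum_sub_distrib, Finset.sum_const,
        Finset.card_univ, Fintype.card_fin, nsmul_eq_mul]
      field_simp
      ring
  · rintro ⟨x, -, rfl⟩
    exact ⟨x, fun i j => rfl⟩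

def vsComponent : Fin 3 → (Fin d → ℝ) →ₗ[ℝ] Matrix (Fin d) (Fin d) ℝ :=
  ![Matrix.diagonalLinearMap (Fin d) ℝ ℝ, pairSumMatrix, pairDiffMatrix]

def vsMap : (Fin 3 → Fin d → ℝ) →ₗ[ℝ] Matrix (Fin d) (Fin d) ℝ :=
  ∑ p, vsComponent p ∘ₗ LinearMap.proj p

theorem vsMap_eq_sum (v : Fin 3 → Fin d → ℝ) : vsMap v = ∑ p, vsComponent p (v p) := by
  simp [vsMap]

theorem vsMap_apply (v : Fin 3 → Fin d → ℝ) :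
    vsMap v = diagonal (v 0) + pairSumMatrix (v 1) + pairDiffMatrix (v 2) := by
  simp [vsMap, vsComponent, Fin.sum_univ_three]

def IsPermEquivariant (ψ : (Fin d → ℝ) →ₗ[ℝ] Matrix (Fin d) (Fin d) ℝ) : Prop :=
  ∀ (σ : Equiv.Perm (Fin d)) (x : Fin d → ℝ),
    ψ (fun i => x (σ⁻¹ i)) = permMat σ * ψ x * (permMat σ)ᵀ

theorem isPermEquivariant_vsComponent (p : Fin 3) :
    IsPermEquivariant (vsComponent (d := d) p) := by
  intro σ x
  ext i j
  rw [permMat_mul_mul_transpose_apply]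
  fin_cases p <;> simp [vsComponent, diagonal_apply]

theorem IsPermEquivariant.linearMap_comp {A : Module.End ℝ (Matrix (Fin d) (Fin d) ℝ)}
    (hA : ∀ (σ : Equiv.Perm (Fin d)) (W : Matrix (Fin d) (Fin d) ℝ),
      A (permMat σ * W * (permMat σ)ᵀ) = permMat σ * A W * (permMat σ)ᵀ)
    {ψ : (Fin d → ℝ) →ₗ[ℝ] Matrix (Fin d) (Fin d) ℝ} (hψ : IsPermEquivariant ψ) :
    IsPermEquivariant (A ∘ₗ ψ) := fun σ x => by
  simp only [LinearMap.comp_apply, hψ σ x, hA]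

section Equivariant

variable {ψ : (Fin d → ℝ) →ₗ[ℝ] Matrix (Fin d) (Fin d) ℝ}

theorem IsPermEquivariant.apply_single_perm (hψ : IsPermEquivariant ψ) (σ : Equiv.Perm (Fin d))
    (i j k : Fin d) :
    ψ (Pi.single (σ k) 1) (σ i) (σ j) = ψ (Pi.single k 1) i j := by
  have : (fun l => (Pi.single k 1 : Fin d → ℝ) (σ⁻¹ l)) = Pi.single (σ k) 1 := by
    ext l
    simp [Pi.single_apply, Equiv.symm_apply_eq]
  rw [← this, hψ, permMat_mul_mul_transpose_apply]
  simp

theorem IsPermEquivariant.apply_single_comp_eq (hψ : IsPermEquivariant ψ) {m : ℕ}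
    {f g : Fin m → Fin d} (hf : Function.Injective f) (hg : Function.Injective g) (a b c : Fin m) :
    ψ (Pi.single (g c) 1) (g a) (g b) = ψ (Pi.single (f c) 1) (f a) (f b) := by
  obtain ⟨σ, hσ⟩ := Equiv.Perm.exists_extending_pair f g hf hg
  rw [← hσ, ← hσ, ← hσ]
  exact hψ.apply_single_perm σ _ _ _

theorem IsPermEquivariant.apply_single_diag (hψ : IsPermEquivariant ψ) {a b : Fin d}
    (hab : a ≠ b) (i k : Fin d) :
    ψ (Pi.single k 1) i i = ψ (Pi.single b 1) a a +
      if k = i then ψ (Pi.single a 1) a a - ψ (Pi.single b 1) a a else 0 := by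
  by_cases hki : k = i
  · subst hki
    simpa using hψ.apply_single_comp_eq (f := ![a]) (g := ![k])
      (Function.injective_of_subsingleton _) (Function.injective_of_subsingleton _) 0 0 0
  · simpa [hki] using hψ.apply_single_comp_eq (f := ![a, b]) (g := ![i, k])
      (by simpa using hab) (by simpa using Ne.symm hki) 0 0 1

theorem IsPermEquivariant.apply_single_offDiag (hψ : IsPermEquivariant ψ) {a b c : Fin d}
    (hab : a ≠ b) (hac : a ≠ c) (hbc : b ≠ c) {i j : Fin d} (hij : i ≠ j) (k : Fin d) :
    ψ (Pi.single k 1) i j = ψ (Pi.single c 1) a b +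
      (if k = i then ψ (Pi.single a 1) a b - ψ (Pi.single c 1) a b else 0) +
      (if k = j then ψ (Pi.single b 1) a b - ψ (Pi.single c 1) a b else 0) := by
  have hpair := hψ.apply_single_comp_eq (f := ![a, b]) (g := ![i, j]) (by simpa using hab)
    (by simpa using hij)
  by_cases hki : k = i
  · subst hki; simpa [hij] using hpair 0 1 0
  by_cases hkj : k = j
  · subst hkj; simpa [hki] using hpair 0 1 1
  · simpa [hki, hkj] using hψ.apply_single_comp_eq (f := ![a, b, c]) (g := ![i, j, k])
      (injective_vec_three hab hac hbc) (injective_vec_three hij (Ne.symm hki) (Ne.symm hkj))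
      0 1 2

theorem sum_smul_vsComponent_apply (m : Fin 3 → ℝ) (x : Fin d → ℝ) (i j : Fin d) :
    (∑ q, m q • vsComponent q x) i j =
      if i = j then m 0 * x i else m 1 * (x i + x j) + m 2 * (x i - x j) := by
  by_cases hij : i = j <;> simp [Fin.sum_univ_three, vsComponent, hij]

/-- The entry `ψ (Pi.single k 1) i j` only depends on the equality pattern of `(i, j, k)`, which
leaves five constants. For `x ∈ sumZero d` the terms with `k ∉ {i, j}` add up to `-x i` or
`-(x i + x j)`, so only three combinations of the constants survive. -/
theorem IsPermEquivariant.exists_eq_sum_vsComponent (hψ : IsPermEquivariant ψ) (hd : 3 ≤ d) :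
    ∃ m : Fin 3 → ℝ, ∀ x ∈ sumZero d, ψ x = ∑ q, m q • vsComponent q x := by
  obtain ⟨a, b, c, hab, hac, hbc⟩ :=
    (Fintype.two_lt_card_iff (α := Fin d)).1 (by rw [Fintype.card_fin]; omega)
  set κ : Fin d → Fin d → Fin d → ℝ := fun i j k => ψ (Pi.single k 1) i j
  refine ⟨![κ a a a - κ a a b, (κ a b a + κ a b b - 2 * κ a b c) / 2, (κ a b a - κ a b b) / 2],
    fun x hx => ?_⟩
  rw [mem_sumZero] at hx
  ext i j
  rw [show ψ x i j = ∑ k, x k * κ i j k by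
    conv_lhs => rw [pi_eq_sum_univ' x]
    simp [κ, Matrix.sum_apply]]
  rw [sum_smul_vsComponent_apply]
  by_cases hij : i = j
  · subst hij
    rw [if_pos rfl,
      Finset.sum_congr rfl fun k _ => congrArg (x k * ·) (hψ.apply_single_diag hab i k)]
    simp only [mul_add, mul_ite, mul_zero, Finset.sum_add_distrib, ← Finset.sum_mul, hx, zero_mul,
      Finset.sum_ite_eq', Finset.mem_univ, if_true, zero_add, cons_val_zero]
    ring
  · rw [if_neg hij, Finset.sum_congr rfl fun k _ =>
      congrArg (x k * ·) (hψ.apply_single_offDiag hab hac hbc hij k)]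
    simp only [mul_add, mul_ite, mul_zero, Finset.sum_add_distrib, ← Finset.sum_mul, hx, zero_mul,
      Finset.sum_ite_eq', Finset.mem_univ, if_true, zero_add, cons_val_zero, cons_val_one, cons_val]
    ring

end Equivariant

theorem permMat_mul_vsMap_mul_transpose (σ : Equiv.Perm (Fin d)) (v : Fin 3 → Fin d → ℝ) :
    permMat σ * vsMap v * (permMat σ)ᵀ = vsMap fun p i => v p (σ⁻¹ i) := by
  rw [vsMap_eq_sum, vsMap_eq_sum, Matrix.mul_sum, Matrix.sum_mul]
  exact Finset.sum_congr rfl fun p _ => (isPermEquivariant_vsComponent p σ (v p)).symm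

theorem eq_zero_of_vsMap_eq_zero (hd : 3 ≤ d) {v : Fin 3 → Fin d → ℝ} (hv : v 2 ∈ sumZero d)
    (h : vsMap v = 0) : v = 0 := by
  have hent : ∀ i j, vsMap v i j = 0 := fun i j => by rw [h]; rfl
  simp only [vsMap_apply, Matrix.add_apply, diagonal_apply, pairSumMatrix_apply,
    pairDiffMatrix_apply] at hent
  have h0 : ∀ i, v 0 i = 0 := fun i => by simpa using hent i i
  have hsym : ∀ i j, i ≠ j → v 1 i + v 1 j = 0 ∧ v 2 i = v 2 j := fun i j hij => by
    have h₁ := hent i j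
    have h₂ := hent j i
    simp only [hij, Ne.symm hij, if_false, zero_add] at h₁ h₂
    constructor <;> linarith
  have h1 : ∀ i, v 1 i = 0 := by
    obtain ⟨a, b, c, hab, hac, hbc⟩ :=
    (Fintype.two_lt_card_iff (α := Fin d)).1 (by rw [Fintype.card_fin]; omega)
    have ha : v 1 a = 0 := by linarith [(hsym a b hab).1, (hsym a c hac).1, (hsym b c hbc).1]
    intro i
    by_cases hia : i = a
    · rwa [hia]
    · linarith [(hsym i a hia).1]
  have h2 : ∀ i, v 2 i = 0 := fun i => by
    have hconst : ∀ j, v 2 j = v 2 i := fun j => by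
      by_cases hji : j = i
      · rw [hji]
      · exact (hsym j i hji).2
    rw [mem_sumZero, Finset.sum_congr rfl fun j _ => hconst j] at hv
    have : (d : ℝ) ≠ 0 := by norm_cast; omega
    simpa [this] using hv
  ext p i
  fin_cases p
  exacts [h0 i, h1 i, h2 i]

def vsMapOn (Y : Submodule ℝ (Fin d → ℝ)) : (Fin 3 → Y) →ₗ[ℝ] Matrix (Fin d) (Fin d) ℝ :=
  vsMap ∘ₗ Y.subtype.compLeft (Fin 3)

theorem vsMapOn_apply (Y : Submodule ℝ (Fin d → ℝ)) (v : Fin 3 → Y) :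
    vsMapOn Y v = vsMap fun p => (v p : Fin d → ℝ) := rfl

theorem exists_comp_vsMapOn_eq (hd : 3 ≤ d) {A : Module.End ℝ (Matrix (Fin d) (Fin d) ℝ)}
    (hA : ∀ (σ : Equiv.Perm (Fin d)) (W : Matrix (Fin d) (Fin d) ℝ),
      A (permMat σ * W * (permMat σ)ᵀ) = permMat σ * A W * (permMat σ)ᵀ) :
    ∃ M : Matrix (Fin 3) (Fin 3) ℝ, ∀ Y ≤ sumZero d, A ∘ₗ vsMapOn Y = vsMapOn Y ∘ₗ M.toEndPi := by
  choose m hm using fun p =>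
    ((isPermEquivariant_vsComponent p).linearMap_comp hA).exists_eq_sum_vsComponent hd
  refine ⟨Matrix.of fun q p => m p q, fun Y hY => LinearMap.ext fun v => ?_⟩
  simp only [LinearMap.comp_apply, vsMapOn_apply, vsMap_eq_sum, map_sum, Matrix.toEndPi_apply,
    Submodule.coe_sum, Submodule.coe_smul, map_smul, Matrix.of_apply]
  rw [Finset.sum_comm]
  exact Finset.sum_congr rfl fun p _ => hm p _ (hY (v p).2)

theorem injective_vsMapOn (hd : 3 ≤ d) {Y : Submodule ℝ (Fin d → ℝ)} (hY : Y ≤ sumZero d) :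
    Function.Injective (vsMapOn Y) := by
  refine (injective_iff_map_eq_zero _).2 fun v hv => funext fun p => Subtype.ext ?_
  exact congr_fun (eq_zero_of_vsMap_eq_zero hd (hY (v 2).2) hv) p

theorem range_vsMapOn (Y : Submodule ℝ (Fin d → ℝ)) :
    LinearMap.range (vsMapOn Y) =
      Y.map (diagonalLinearMap (Fin d) ℝ ℝ) ⊔ Y.map pairSumMatrix ⊔ Y.map pairDiffMatrix := by
  apply le_antisymm
  · rintro _ ⟨v, rfl⟩
    rw [vsMapOn_apply, vsMap_apply]
    exact add_mem (add_mem (mem_sup_left (mem_sup_left (mem_map_of_mem (v 0).2)))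
      (mem_sup_left (mem_sup_right (mem_map_of_mem (v 1).2))))
      (mem_sup_right (mem_map_of_mem (v 2).2))
  · have h : ∀ p, Y.map (vsComponent p) ≤ LinearMap.range (vsMapOn Y) := by
      rintro p _ ⟨y, hy, rfl⟩
      refine ⟨Pi.single p ⟨y, hy⟩, ?_⟩
      rw [vsMapOn_apply, vsMap_eq_sum, Finset.sum_eq_single p] <;> intros <;> simp_all
    exact sup_le (sup_le (h 0) (h 1)) (h 2)

theorem range_vsMapOn_sumZero : LinearMap.range (vsMapOn (sumZero d)) = Vs d := by
  rw [range_vsMapOn, Vs, Dd2_eq_map, Sd2_eq_map, Ad1_eq_map]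

theorem range_vsMapOn_inf_fixedVectors (hd : 3 ≤ d) (G : Set (Equiv.Perm (Fin d))) :
    LinearMap.range (vsMapOn (sumZero d ⊓ fixedVectors G)) = Vs d ⊓ fixedSpace G := by
  ext W
  constructor
  · rintro ⟨v, rfl⟩
    refine ⟨?_, fun σ hσ => ?_⟩
    · rw [← range_vsMapOn_sumZero]
      exact ⟨fun p => Submodule.inclusion inf_le_left (v p), rfl⟩
    · rw [vsMapOn_apply, permMat_mul_vsMap_mul_transpose]
      exact congr_arg vsMap (funext fun p => (v p).2.2 σ hσ)
  · rintro ⟨hV, hF⟩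
    rw [← range_vsMapOn_sumZero] at hV
    obtain ⟨v, rfl⟩ := hV
    have hfix : ∀ σ ∈ G, ∀ p, (fun i => (v p : Fin d → ℝ) (σ⁻¹ i)) = v p := fun σ hσ p => by
      have := hF σ hσ
      rw [vsMapOn_apply, permMat_mul_vsMap_mul_transpose] at this
      exact congr_arg Subtype.val (congr_fun
        (injective_vsMapOn hd le_rfl (a₁ := fun p => ⟨_, perm_mem_sumZero (v p).2 σ⟩) this) p)
    exact ⟨fun p => ⟨v p, (v p).2, fun σ hσ => hfix σ hσ p⟩, rfl⟩

theorem finrank_sumZero_inf_fixedVectors_stabilizer (hd : 2 ≤ d) (a : Fin d) :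
    finrank ℝ ↥(sumZero d ⊓ fixedVectors {σ : Equiv.Perm (Fin d) | σ a = a}) = 1 := by
  have : Nontrivial (Fin d) := Fin.nontrivial_iff_two_le.2 hd
  obtain ⟨b, hba⟩ := exists_ne a
  set w : Fin d → ℝ := fun i => 1 - if i = a then (d : ℝ) else 0 with hw
  have hw_mem : w ∈ sumZero d ⊓ fixedVectors {σ : Equiv.Perm (Fin d) | σ a = a} := by
    refine ⟨?_, fun σ (hσ : σ a = a) => funext fun i => ?_⟩
    · simp [hw, Finset.sum_sub_distrib]
    · simp [hw, Equiv.symm_apply_eq, hσ]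
  have hspan : sumZero d ⊓ fixedVectors {σ : Equiv.Perm (Fin d) | σ a = a} = ℝ ∙ w := by
    refine le_antisymm (fun x ⟨hsum, hfix⟩ => mem_span_singleton.2 ⟨x b, ?_⟩)
      (span_le.2 (Set.singleton_subset_iff.2 hw_mem))
    have hconst : ∀ i ≠ a, x i = x b := fun i hia => by
      have hswap : Equiv.swap b i a = a := Equiv.swap_apply_of_ne_of_ne hba.symm hia.symm
      simpa using congr_fun (hfix (Equiv.swap b i) hswap) b
    have hsplit : x = fun i => x b + if i = a then x a - x b else 0 := funext fun i => by
      by_cases hia : i = a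
      · simp [hia]
      · simp [hia, hconst i hia]
    have hxa : x a = (1 - d) * x b := by
      rw [SetLike.mem_coe, mem_sumZero, hsplit] at hsum
      simp only [Finset.sum_add_distrib, Finset.sum_const, Finset.card_univ, Fintype.card_fin,
        nsmul_eq_mul, Finset.sum_ite_eq', Finset.mem_univ, if_true] at hsum
      linarith
    ext i
    by_cases hia : i = a
    · simp [hw, hia, hxa, mul_comm]
    · simp [hw, hia, hconst i hia]
  rw [hspan, finrank_span_singleton]
  intro h
  simpa [hw, hba] using congr_fun h b

/-- for `d ≥ 4`, an `S_d`-equivariant linear endomorphism `A` of `M(d,d)`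
preserves both `V_s` and `F = V_s ∩ M(d,d)^{S_{d−1}×S_1}`, and the characteristic
polynomial of `A|_{V_s}` is the `(d−1)`-st power of the characteristic polynomial of
`A|_F`. -/
theorem charpoly_of_restriction_to_Vs (d : ℕ) (hd : 4 ≤ d)
    (A : Matrix (Fin d) (Fin d) ℝ →ₗ[ℝ] Matrix (Fin d) (Fin d) ℝ)
    (hA : ∀ (σ : Equiv.Perm (Fin d)) (W : Matrix (Fin d) (Fin d) ℝ),
      A (permMat σ * W * (permMat σ)ᵀ) = permMat σ * A W * (permMat σ)ᵀ) :
    ∃ (h1 : ∀ W ∈ Vs d, A W ∈ Vs d)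
      (h2 : ∀ W ∈ Vs d ⊓ fixedSpace {σ : Equiv.Perm (Fin d) |
          σ ⟨d - 1, by omega⟩ = ⟨d - 1, by omega⟩},
        A W ∈ Vs d ⊓ fixedSpace {σ : Equiv.Perm (Fin d) |
          σ ⟨d - 1, by omega⟩ = ⟨d - 1, by omega⟩}),
      LinearMap.charpoly (A.restrict h1) = LinearMap.charpoly (A.restrict h2) ^ (d - 1) := by
  obtain ⟨M, hM⟩ := exists_comp_vsMapOn_eq (by omega) hA
  obtain ⟨h1, hVs⟩ := LinearMap.exists_restrict_charpoly_eq
    (injective_vsMapOn (by omega) le_rfl) (hM _ le_rfl) range_vsMapOn_sumZero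
  obtain ⟨h2, hF⟩ := LinearMap.exists_restrict_charpoly_eq
    (injective_vsMapOn (by omega) inf_le_left) (hM _ inf_le_left)
    (range_vsMapOn_inf_fixedVectors (by omega) _)
  refine ⟨h1, h2, ?_⟩
  rw [hVs, hF, Matrix.charpoly_toEndPi, Matrix.charpoly_toEndPi, finrank_sumZero (by omega),
    finrank_sumZero_inf_fixedVectors_stabilizer (by omega), pow_one]
end
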